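/- arXiv:2007.04888 — 2 statements merged into one kernel-verified Lean document; each statement's English description precedes it below -/
import Mathlib

section
/- (Lemma 'tsr help', the key combinatorial lemma of the paper.) Let A and Z be seminormal crystals, let u ∈ A, z ∈ Z, and let j_1, …, j_m ∈ I. Suppose that F_{j_1}⋯F_{j_m}({u ⊗ z}) ⊆ {u} ⊗ Z inside the tensor product crystal A ⊗ Z (i.e., every element of this set has first tensor factor equal to u). Then for all d_1, …, d_m ∈ ℤ_{≥0}, the monomial G = f_{j_1}^{d_1} ⋯ f_{j_m}^{d_m} satisfies G(u ⊗ z) = u ⊗ G(z) in (A ⊗ Z) ⊔ {0}, with the convention u ⊗ 0 := 0. -/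
/-!
Common setup: seminormal crystals over an index type `I` and a weight group `P`,
with simple roots `α : I → P` and coroot pairings `pair : I → P →+ ℤ`.
We model `B ⊔ {0}` as `Option B` with `0 = none`.
-/

/-- Iterate a partial map `g : B → Option B` (extended by `0 ↦ 0`) `n` times. -/
def optIter {B : Type*} (g : B → Option B) : ℕ → Option B → Option B
  | 0, x => x
  | n + 1, x => (optIter g n x).bind g

/-- A seminormal crystal: a set `B` with weight map `wt : B → P` and partial
crystal operators `e i, f i : B → Option B` (with the convention `0 ↦ 0`),
together with the (finite) string lengths `eps` and `phi`, satisfying the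
seminormal crystal axioms. -/
structure SNCrystal (I : Type*) (P : Type*) [AddCommGroup P]
    (α : I → P) (pair : I → P →+ ℤ) (B : Type*) where
  wt : B → P
  e : I → B → Option B
  f : I → B → Option B
  /-- `eps i b = max {k ≥ 0 ∣ e_i^k b ≠ 0}` (finiteness is the existence of this field). -/
  eps : I → B → ℕ
  /-- `phi i b = max {k ≥ 0 ∣ f_i^k b ≠ 0}` (finiteness is the existence of this field). -/
  phi : I → B → ℕ
  wt_e : ∀ i b b', e i b = some b' → wt b' = wt b + α i
  wt_f : ∀ i b b', f i b = some b' → wt b' = wt b - α i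
  eps_spec : ∀ i b, optIter (e i) (eps i b) (some b) ≠ none
  eps_max : ∀ i b, optIter (e i) (eps i b + 1) (some b) = none
  phi_spec : ∀ i b, optIter (f i) (phi i b) (some b) ≠ none
  phi_max : ∀ i b, optIter (f i) (phi i b + 1) (some b) = none
  pair_wt : ∀ i b, pair i (wt b) = (phi i b : ℤ) - (eps i b : ℤ)
  f_e : ∀ i b b', e i b = some b' → f i b' = some b
  e_f : ∀ i b b', f i b = some b' → e i b' = some b

/-- The raising operator of the tensor product crystal `B₁ ⊗ B₂`:
`e_i(b₁ ⊗ b₂) = e_i b₁ ⊗ b₂` if `φ_i(b₁) ≥ ε_i(b₂)`, else `b₁ ⊗ e_i b₂`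
(with `0 ⊗ b₂ = b₁ ⊗ 0 = 0`). -/
def tensorE {I P : Type*} [AddCommGroup P] {α : I → P} {pair : I → P →+ ℤ}
    {B1 B2 : Type*} (C1 : SNCrystal I P α pair B1) (C2 : SNCrystal I P α pair B2)
    (i : I) (b : B1 × B2) : Option (B1 × B2) :=
  if C2.eps i b.2 ≤ C1.phi i b.1 then (C1.e i b.1).map (fun x => (x, b.2))
  else (C2.e i b.2).map (fun x => (b.1, x))

/-- The lowering operator of the tensor product crystal `B₁ ⊗ B₂`:
`f_i(b₁ ⊗ b₂) = f_i b₁ ⊗ b₂` if `φ_i(b₁) > ε_i(b₂)`, else `b₁ ⊗ f_i b₂`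
(with `0 ⊗ b₂ = b₁ ⊗ 0 = 0`). -/
def tensorF {I P : Type*} [AddCommGroup P] {α : I → P} {pair : I → P →+ ℤ}
    {B1 B2 : Type*} (C1 : SNCrystal I P α pair B1) (C2 : SNCrystal I P α pair B2)
    (i : I) (b : B1 × B2) : Option (B1 × B2) :=
  if C2.eps i b.2 < C1.phi i b.1 then (C1.f i b.1).map (fun x => (x, b.2))
  else (C2.f i b.2).map (fun x => (b.1, x))

/-- `T` is the tensor product crystal `C1 ⊗ C2` on the set `B1 × B2`:
its weight map and crystal operators are given by the tensor product rule. -/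
def IsTensor {I P : Type*} [AddCommGroup P] {α : I → P} {pair : I → P →+ ℤ}
    {B1 B2 : Type*} (C1 : SNCrystal I P α pair B1) (C2 : SNCrystal I P α pair B2)
    (T : SNCrystal I P α pair (B1 × B2)) : Prop :=
  (∀ b : B1 × B2, T.wt b = C1.wt b.1 + C2.wt b.2) ∧
  (∀ (i : I) (b : B1 × B2), T.e i b = tensorE C1 C2 i b) ∧
  (∀ (i : I) (b : B1 × B2), T.f i b = tensorF C1 C2 i b)

/-- `F_i S = {f_i^k b ∣ b ∈ S, k ≥ 0} \ {0}`. -/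
def Fset {I P : Type*} [AddCommGroup P] {α : I → P} {pair : I → P →+ ℤ}
    {B : Type*} (C : SNCrystal I P α pair B) (i : I) (S : Set B) : Set B :=
  {b | ∃ s ∈ S, ∃ k : ℕ, optIter (C.f i) k (some s) = some b}

/-- `F_{j₁} ⋯ F_{j_m} S` for a word `[j₁, …, j_m]` (the rightmost letter acts first). -/
def Fword {I P : Type*} [AddCommGroup P] {α : I → P} {pair : I → P →+ ℤ}
    {B : Type*} (C : SNCrystal I P α pair B) (w : List I) (S : Set B) : Set B :=
  w.foldr (Fset C) S

/-- The monomial `f_{j₁}^{d₁} ⋯ f_{j_m}^{d_m}` applied to an element of `B ⊔ {0}`,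
given the list of pairs `[(j₁,d₁), …, (j_m,d_m)]` (the rightmost factor acts first). -/
def monomial {I P : Type*} [AddCommGroup P] {α : I → P} {pair : I → P →+ ℤ}
    {B : Type*} (C : SNCrystal I P α pair B) : List (I × ℕ) → Option B → Option B
  | [], x => x
  | p :: rest, x => optIter (C.f p.1) p.2 (monomial C rest x)

/-!
The operator `f_j` on `u ⊗ y` either acts on the second factor or replaces `u` by `f_j u`,
and `f_j u ≠ u` because `φ_j(u)` is finite. So as long as the `F`-set stays inside
`{u} ⊗ Z`, every step of the monomial acts on the second factor; since the `F`-set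
contains every partial product of the monomial, induction on the word gives the claim.
-/

lemma optIter_none {B : Type*} (g : B → Option B) (n : ℕ) :
    optIter g n none = none := by
  induction n with
  | zero => rfl
  | succ n ih => rw [optIter, ih]; rfl

lemma optIter_succ' {B : Type*} (g : B → Option B) (n : ℕ) (x : Option B) :
    optIter g (n + 1) x = optIter g n (x.bind g) := by
  induction n generalizing x with
  | zero => rfl
  | succ n ih => rw [optIter, ih]; rfl

lemma optIter_of_eq_some_self {B : Type*} (g : B → Option B) {b : B} (h : g b = some b)
    (n : ℕ) : optIter g n (some b) = some b := by
  induction n with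
  | zero => rfl
  | succ n ih => rw [optIter, ih, Option.bind_some, h]

lemma optIter_map_of_semiconj_on_orbit {α β : Type*} (g : α → Option α) (h : β → Option β)
    (ι : β → α) (x : β)
    (hg : ∀ n y, optIter g n (some (ι x)) = some (ι y) → g (ι y) = (h y).map ι) (d : ℕ) :
    optIter g d (some (ι x)) = (optIter h d (some x)).map ι := by
  induction d with
  | zero => rfl
  | succ d ih =>
    rw [optIter, optIter, ih]
    cases hy : optIter h d (some x) with
    | none => rfl
    | some y => exact hg d y (by rw [ih, hy]; rfl)

namespace SNCrystal

variable {I P : Type*} [AddCommGroup P] {α : I → P} {pair : I → P →+ ℤ} {B : Type*}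
  (C : SNCrystal I P α pair B)

lemma f_ne_self (i : I) (b : B) : C.f i b ≠ some b := fun h => by
  simpa [optIter_of_eq_some_self _ h] using C.phi_max i b

lemma f_ne_none_of_phi_pos {i : I} {b : B} (h : 0 < C.phi i b) : C.f i b ≠ none := by
  intro hf
  obtain ⟨k, hk⟩ := Nat.exists_eq_succ_of_ne_zero h.ne'
  have := C.phi_spec i b
  rw [hk, optIter_succ', Option.bind_some, hf, optIter_none] at this
  exact this rfl

lemma subset_Fset (i : I) (S : Set B) : S ⊆ Fset C i S :=
  fun s hs => ⟨s, hs, 0, rfl⟩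

lemma subset_Fword (w : List I) (S : Set B) : S ⊆ Fword C w S := by
  induction w with
  | nil => exact le_rfl
  | cons i w ih => exact ih.trans (C.subset_Fset i _)

lemma monomial_mem_Fword (w : List I) (ds : List ℕ) (b : B) {p : B}
    (hp : monomial C (w.zip ds) (some b) = some p) : p ∈ Fword C w {b} := by
  induction w generalizing ds p with
  | nil => cases hp; rfl
  | cons i w ih =>
    cases ds with
    | nil => cases hp; exact C.subset_Fword _ _ rfl
    | cons d ds =>
      change optIter (C.f i) d (monomial C (w.zip ds) (some b)) = some p at hp
      cases hq : monomial C (w.zip ds) (some b) with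
      | none => rw [hq, optIter_none] at hp; cases hp
      | some q => rw [hq] at hp; exact ⟨q, ih ds hq, d, hp⟩

end SNCrystal

namespace IsTensor

variable {I P : Type*} [AddCommGroup P] {α : I → P} {pair : I → P →+ ℤ} {A Z : Type*}
  {CA : SNCrystal I P α pair A} {CZ : SNCrystal I P α pair Z} {T : SNCrystal I P α pair (A × Z)}

lemma f_eq_map_snd (hT : IsTensor CA CZ T) {j : I} {u : A} {y : Z}
    (hfst : ∀ p, T.f j (u, y) = some p → p.1 = u) :
    T.f j (u, y) = (CZ.f j y).map (Prod.mk u) := by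
  rw [hT.2.2, tensorF]
  split_ifs with hlt
  · obtain ⟨a, ha⟩ := Option.ne_none_iff_exists'.mp
      (CA.f_ne_none_of_phi_pos (Nat.zero_lt_of_lt hlt))
    have hau : a = u := hfst (a, y) (by rw [hT.2.2, tensorF, if_pos hlt, ha]; rfl)
    exact absurd (hau ▸ ha) (CA.f_ne_self j u)
  · rfl

lemma optIter_f_eq_map_snd (hT : IsTensor CA CZ T) (j : I) (u : A) (x : Z)
    (hfst : ∀ k p, optIter (T.f j) k (some (u, x)) = some p → p.1 = u) (d : ℕ) :
    optIter (T.f j) d (some (u, x)) = (optIter (CZ.f j) d (some x)).map (Prod.mk u) :=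
  optIter_map_of_semiconj_on_orbit _ _ (Prod.mk u) x
    (fun n _ hn => hT.f_eq_map_snd fun p hp => hfst (n + 1) p (by rw [optIter, hn]; exact hp)) d

end IsTensor

/-- Lemma "tsr help". Let `A`, `Z` be seminormal crystals, `u ∈ A`,
`z ∈ Z`, and `j₁, …, j_m ∈ I`. If `F_{j₁}⋯F_{j_m}({u ⊗ z}) ⊆ {u} ⊗ Z` in `A ⊗ Z`,
then for all `d₁, …, d_m ≥ 0`, the monomial `G = f_{j₁}^{d₁}⋯f_{j_m}^{d_m}` satisfies
`G(u ⊗ z) = u ⊗ G(z)` (with the convention `u ⊗ 0 = 0`). -/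
theorem tsr_help {I P : Type*} [AddCommGroup P] {α : I → P} {pair : I → P →+ ℤ}
    {A Z : Type*} (CA : SNCrystal I P α pair A) (CZ : SNCrystal I P α pair Z)
    (T : SNCrystal I P α pair (A × Z)) (hT : IsTensor CA CZ T)
    (u : A) (z : Z) (js : List I)
    (hF : Fword T js {(u, z)} ⊆ {p : A × Z | p.1 = u}) :
    ∀ ds : List ℕ, ds.length = js.length →
      monomial T (js.zip ds) (some (u, z)) =
        (monomial CZ (js.zip ds) (some z)).map (fun y => (u, y)) := by
  induction js with
  | nil => intro ds _; rfl
  | cons j js ih =>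
    rintro (_ | ⟨d, ds⟩) hlen
    · rfl
    have hprefix := ih ((T.subset_Fset j _).trans hF) ds (by simpa using hlen)
    change optIter (T.f j) d (monomial T (js.zip ds) _) =
      (optIter (CZ.f j) d (monomial CZ (js.zip ds) _)).map _
    rw [hprefix]
    cases hy : monomial CZ (js.zip ds) (some z) with
    | none => simp [optIter_none]
    | some y =>
      have hy_mem : (u, y) ∈ Fword T js {(u, z)} :=
        T.monomial_mem_Fword js ds _ (by rw [hprefix, hy]; rfl)
      exact hT.optIter_f_eq_map_snd j u y (fun k p hk => hF ⟨_, hy_mem, k, hk⟩) d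
end

section
/- (The tensor product rule defines a seminormal crystal.) Let B_1 and B_2 be seminormal crystals. Then the set B_1 × B_2 equipped with wt(b_1 ⊗ b_2) = wt(b_1) + wt(b_2) and the tensor product operators e_i, f_i defined by the signature rule is again a seminormal crystal; that is, it satisfies all the crystal axioms: the weight changes by ±α_i under e_i and f_i when the result is nonzero, ε_i and φ_i are finite on B_1 ⊗ B_2, ⟨α_i^∨, wt(b_1) + wt(b_2)⟩ = φ_i(b_1 ⊗ b_2) − ε_i(b_1 ⊗ b_2), and e_i and f_i are mutually inverse where nonzero. -/
/-!
The string lengths of `b₁ ⊗ b₂` are `ε(b₁) + max(0, ε(b₂) − φ(b₁))` and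
`φ(b₂) + max(0, φ(b₁) − ε(b₂))`. The tensor `e_i` (resp. `f_i`) is defined exactly when the
first (resp. second) of these is positive and lowers it by one, which makes it the string
length. Applying `e_i` in either factor raises `φ(b₁) − ε(b₂)` by one, which turns the branch
condition of the `e_i` rule into that of the `f_i` rule, so `f_i` acts on the same factor and
undoes `e_i` (and symmetrically).
-/

section StringLength

variable {B : Type*}

def IsStringLength (g : B → Option B) (b : B) (k : ℕ) : Prop :=
  optIter g k (some b) ≠ none ∧ optIter g (k + 1) (some b) = none

theorem optIter_succ_eq_bind (g : B → Option B) (n : ℕ) (x : Option B) :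
    optIter g (n + 1) x = optIter g n (x.bind g) := by
  induction n generalizing x with
  | zero => rfl
  | succ n ih => exact congrArg (·.bind g) (ih x)

theorem optIter_eq_none_of_le {g : B → Option B} {n m : ℕ} {x : Option B}
    (h : optIter g n x = none) (hnm : n ≤ m) : optIter g m x = none := by
  induction m, hnm using Nat.le_induction with
  | base => exact h
  | succ m _ ih => exact congrArg (·.bind g) ih

namespace IsStringLength

variable {g : B → Option B} {b : B} {k : ℕ}

theorem unique {k' : ℕ} (hk : IsStringLength g b k) (hk' : IsStringLength g b k') :
    k = k' := by
  by_contra hne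
  rcases Nat.lt_or_gt_of_ne hne with h | h
  · exact hk'.1 (optIter_eq_none_of_le hk.2 h)
  · exact hk.1 (optIter_eq_none_of_le hk'.2 h)

theorem eq_zero_iff (hk : IsStringLength g b k) : k = 0 ↔ g b = none :=
  ⟨fun h => by simpa [h, optIter] using hk.2,
    fun h => hk.unique ⟨by simp [optIter], by simpa [optIter] using h⟩⟩

theorem succ {b' : B} (hg : g b = some b') (hk : IsStringLength g b' k) :
    IsStringLength g b (k + 1) := by
  simpa only [IsStringLength, optIter_succ_eq_bind _ _ (some b), Option.bind_some, hg] using hk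

theorem of_decreasing (μ : B → ℕ) (hstep : ∀ b b', g b = some b' → μ b = μ b' + 1)
    (hnone : ∀ b, g b = none ↔ μ b = 0) (b : B) : IsStringLength g b (μ b) := by
  induction hμ : μ b generalizing b with
  | zero => exact ⟨by simp [optIter], by simpa [optIter] using (hnone b).2 hμ⟩
  | succ n ih =>
    obtain ⟨b', hb'⟩ := Option.ne_none_iff_exists'.mp (mt (hnone b).1 (by omega))
    exact succ hb' (ih b' (by have := hstep b b' hb'; omega))

end IsStringLength

end StringLength

namespace SNCrystal

variable {I P : Type*} [AddCommGroup P] {α : I → P} {pair : I → P →+ ℤ}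
  {B : Type*} (C : SNCrystal I P α pair B) {i : I} {b b' : B}

theorem isStringLength_eps : IsStringLength (C.e i) b (C.eps i b) :=
  ⟨C.eps_spec i b, C.eps_max i b⟩

theorem isStringLength_phi : IsStringLength (C.f i) b (C.phi i b) :=
  ⟨C.phi_spec i b, C.phi_max i b⟩

theorem eps_eq_zero_iff : C.eps i b = 0 ↔ C.e i b = none :=
  C.isStringLength_eps.eq_zero_iff

theorem phi_eq_zero_iff : C.phi i b = 0 ↔ C.f i b = none :=
  C.isStringLength_phi.eq_zero_iff

theorem eps_of_e (h : C.e i b = some b') : C.eps i b = C.eps i b' + 1 :=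
  C.isStringLength_eps.unique (C.isStringLength_eps.succ h)

theorem phi_of_f (h : C.f i b = some b') : C.phi i b = C.phi i b' + 1 :=
  C.isStringLength_phi.unique (C.isStringLength_phi.succ h)

theorem phi_of_e (h : C.e i b = some b') : C.phi i b' = C.phi i b + 1 :=
  C.phi_of_f (C.f_e i b b' h)

theorem eps_of_f (h : C.f i b = some b') : C.eps i b' = C.eps i b + 1 :=
  C.eps_of_e (C.e_f i b b' h)

end SNCrystal

section Tensor

variable {I P : Type*} [AddCommGroup P] {α : I → P} {pair : I → P →+ ℤ}
  {B1 B2 : Type*} (C1 : SNCrystal I P α pair B1) (C2 : SNCrystal I P α pair B2)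
  {i : I} {b b' : B1 × B2}

-- Truncated subtraction makes these `ε₁ + max(0, ε₂ − φ₁)` and `φ₂ + max(0, φ₁ − ε₂)`.
def tensorEps (i : I) (b : B1 × B2) : ℕ :=
  C1.eps i b.1 + (C2.eps i b.2 - C1.phi i b.1)

def tensorPhi (i : I) (b : B1 × B2) : ℕ :=
  C2.phi i b.2 + (C1.phi i b.1 - C2.eps i b.2)

theorem tensorE_eq_some (h : tensorE C1 C2 i b = some b') :
    (C2.eps i b.2 ≤ C1.phi i b.1 ∧ ∃ x, C1.e i b.1 = some x ∧ b' = (x, b.2)) ∨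
      (C1.phi i b.1 < C2.eps i b.2 ∧ ∃ x, C2.e i b.2 = some x ∧ b' = (b.1, x)) := by
  unfold tensorE at h
  split_ifs at h with hc <;> obtain ⟨x, hx, rfl⟩ := Option.map_eq_some_iff.mp h
  · exact .inl ⟨hc, x, hx, rfl⟩
  · exact .inr ⟨not_le.mp hc, x, hx, rfl⟩

theorem tensorF_eq_some (h : tensorF C1 C2 i b = some b') :
    (C2.eps i b.2 < C1.phi i b.1 ∧ ∃ x, C1.f i b.1 = some x ∧ b' = (x, b.2)) ∨
      (C1.phi i b.1 ≤ C2.eps i b.2 ∧ ∃ x, C2.f i b.2 = some x ∧ b' = (b.1, x)) := by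
  unfold tensorF at h
  split_ifs at h with hc <;> obtain ⟨x, hx, rfl⟩ := Option.map_eq_some_iff.mp h
  · exact .inl ⟨hc, x, hx, rfl⟩
  · exact .inr ⟨not_lt.mp hc, x, hx, rfl⟩

theorem tensorE_eq_none_iff : tensorE C1 C2 i b = none ↔ tensorEps C1 C2 i b = 0 := by
  unfold tensorE tensorEps
  split_ifs with hc
  · rw [Option.map_eq_none_iff, ← C1.eps_eq_zero_iff]
    omega
  · rw [Option.map_eq_none_iff, ← C2.eps_eq_zero_iff]
    omega

theorem tensorF_eq_none_iff : tensorF C1 C2 i b = none ↔ tensorPhi C1 C2 i b = 0 := by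
  unfold tensorF tensorPhi
  split_ifs with hc
  · rw [Option.map_eq_none_iff, ← C1.phi_eq_zero_iff]
    omega
  · rw [Option.map_eq_none_iff, ← C2.phi_eq_zero_iff]
    omega

theorem tensorEps_of_tensorE (h : tensorE C1 C2 i b = some b') :
    tensorEps C1 C2 i b = tensorEps C1 C2 i b' + 1 := by
  rcases tensorE_eq_some C1 C2 h with ⟨hle, x, hx, rfl⟩ | ⟨hlt, x, hx, rfl⟩
  · have := C1.eps_of_e hx
    have := C1.phi_of_e hx
    simp only [tensorEps]
    omega
  · have := C2.eps_of_e hx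
    simp only [tensorEps]
    omega

theorem tensorPhi_of_tensorF (h : tensorF C1 C2 i b = some b') :
    tensorPhi C1 C2 i b = tensorPhi C1 C2 i b' + 1 := by
  rcases tensorF_eq_some C1 C2 h with ⟨hlt, x, hx, rfl⟩ | ⟨hle, x, hx, rfl⟩
  · have := C1.phi_of_f hx
    simp only [tensorPhi]
    omega
  · have := C2.phi_of_f hx
    have := C2.eps_of_f hx
    simp only [tensorPhi]
    omega

theorem isStringLength_tensorEps :
    IsStringLength (tensorE C1 C2 i) b (tensorEps C1 C2 i b) :=
  .of_decreasing _ (fun _ _ => tensorEps_of_tensorE C1 C2) (fun _ => tensorE_eq_none_iff C1 C2) b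

theorem isStringLength_tensorPhi :
    IsStringLength (tensorF C1 C2 i) b (tensorPhi C1 C2 i b) :=
  .of_decreasing _ (fun _ _ => tensorPhi_of_tensorF C1 C2) (fun _ => tensorF_eq_none_iff C1 C2) b

theorem tensorF_of_tensorE (h : tensorE C1 C2 i b = some b') :
    tensorF C1 C2 i b' = some b := by
  rcases tensorE_eq_some C1 C2 h with ⟨hle, x, hx, rfl⟩ | ⟨hlt, x, hx, rfl⟩
  · have hbranch : C2.eps i b.2 < C1.phi i x := by have := C1.phi_of_e hx; omega
    simp [tensorF, hbranch, C1.f_e i _ _ hx]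
  · have hbranch : ¬C2.eps i x < C1.phi i b.1 := by have := C2.eps_of_e hx; omega
    simp [tensorF, hbranch, C2.f_e i _ _ hx]

theorem tensorE_of_tensorF (h : tensorF C1 C2 i b = some b') :
    tensorE C1 C2 i b' = some b := by
  rcases tensorF_eq_some C1 C2 h with ⟨hlt, x, hx, rfl⟩ | ⟨hle, x, hx, rfl⟩
  · have hbranch : C2.eps i b.2 ≤ C1.phi i x := by have := C1.phi_of_f hx; omega
    simp [tensorE, hbranch, C1.e_f i _ _ hx]
  · have hbranch : ¬C2.eps i x ≤ C1.phi i b.1 := by have := C2.eps_of_f hx; omega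
    simp [tensorE, hbranch, C2.e_f i _ _ hx]

theorem wt_add_of_tensorE (h : tensorE C1 C2 i b = some b') :
    C1.wt b'.1 + C2.wt b'.2 = C1.wt b.1 + C2.wt b.2 + α i := by
  rcases tensorE_eq_some C1 C2 h with ⟨-, x, hx, rfl⟩ | ⟨-, x, hx, rfl⟩
  · rw [C1.wt_e i _ _ hx]; abel
  · rw [C2.wt_e i _ _ hx]; abel

theorem wt_add_of_tensorF (h : tensorF C1 C2 i b = some b') :
    C1.wt b'.1 + C2.wt b'.2 = C1.wt b.1 + C2.wt b.2 - α i := by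
  rcases tensorF_eq_some C1 C2 h with ⟨-, x, hx, rfl⟩ | ⟨-, x, hx, rfl⟩
  · rw [C1.wt_f i _ _ hx]; abel
  · rw [C2.wt_f i _ _ hx]; abel

theorem pair_wt_add (i : I) (b : B1 × B2) :
    pair i (C1.wt b.1 + C2.wt b.2) = (tensorPhi C1 C2 i b : ℤ) - tensorEps C1 C2 i b := by
  rw [map_add, C1.pair_wt, C2.pair_wt, tensorPhi, tensorEps]
  omega

def SNCrystal.tensor : SNCrystal I P α pair (B1 × B2) where
  wt b := C1.wt b.1 + C2.wt b.2
  e := tensorE C1 C2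
  f := tensorF C1 C2
  eps := tensorEps C1 C2
  phi := tensorPhi C1 C2
  wt_e _ _ _ := wt_add_of_tensorE C1 C2
  wt_f _ _ _ := wt_add_of_tensorF C1 C2
  eps_spec _ _ := (isStringLength_tensorEps C1 C2).1
  eps_max _ _ := (isStringLength_tensorEps C1 C2).2
  phi_spec _ _ := (isStringLength_tensorPhi C1 C2).1
  phi_max _ _ := (isStringLength_tensorPhi C1 C2).2
  pair_wt := pair_wt_add C1 C2
  f_e _ _ _ := tensorF_of_tensorE C1 C2
  e_f _ _ _ := tensorE_of_tensorF C1 C2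

end Tensor

/-- the tensor product rule defines a seminormal crystal.
For seminormal crystals `B₁`, `B₂` there exists a seminormal crystal structure on
`B₁ × B₂` whose weight map is `wt(b₁ ⊗ b₂) = wt(b₁) + wt(b₂)` and whose crystal
operators are given by the signature rule; in particular all crystal axioms hold
(weights change by `±α_i`, `ε_i` and `φ_i` are finite, `⟨α_i^∨, wt⟩ = φ_i − ε_i`,
and `e_i`, `f_i` are mutually inverse where nonzero). -/
theorem tensor_is_crystal {I P : Type*} [AddCommGroup P] {α : I → P} {pair : I → P →+ ℤ}
    {B1 B2 : Type*} (C1 : SNCrystal I P α pair B1) (C2 : SNCrystal I P α pair B2) :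
    ∃ T : SNCrystal I P α pair (B1 × B2), IsTensor C1 C2 T :=
  ⟨C1.tensor C2, fun _ => rfl, fun _ _ => rfl, fun _ _ => rfl⟩
end
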